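/- Let $U_q$ be the set of $q$-element subsets of $[n]$, let $a_Z \geq 0$ for $Z \in U_q$, and define $\mu_\ell = \max_{Y \in U_\ell} \sum_{Z \in U_q, Z \supseteq Y} a_Z$. Let $X_1, \dots, X_n$ be independent Bernoulli random variables each with parameter $p \in [0,1]$. Then for any integer $w \geq 0$, $\mathbb{E}\left[ \left( \sum_{Z \in U_q} a_Z \prod_{v \in Z} X_v \right)^w \right] \leq \left( \sum_{k=0}^q \binom{wq}{k} \mu_k p^{q-k} \right)^w$. -/

import Mathlib

/-!
Each `X v` is a.s. `0` or `1`, so `X_W X_Z = X_{W ∪ Z}` for the monomials `X_W = ∏_{v ∈ W} X v`.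
Expanding one factor of `S = ∑_Z a_Z X_Z` at a time and using independence (`𝔼 X_W = p^|W|`)
writes `𝔼[X_W S^m]` as the recursion `expandedMoment`, in which each step contributes
`∑_Z a_Z p^|Z \ W|`. Grouping `Z` by `k = |Z ∩ W|`, at most `C(|W|, k)` sets `Y = Z ∩ W` occur,
each accounting for at most `μ_k`, so the step factor is at most `∑_k C(|W|, k) μ_k p^(q-k)`;
along the recursion `|W| ≤ wq`, which gives the base `∑_k C(wq, k) μ_k p^(q-k)`.
-/

open Finset MeasureTheory ProbabilityTheory

/-- The maximum, over `ℓ`-element subsets `Y` of `[n]`, of the sum of `a Z` over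
`q`-element subsets `Z ⊇ Y` (taken as `0` if there are no `ℓ`-element subsets). -/
noncomputable def polyMu (n q : ℕ) (a : Finset (Fin n) → ℝ) (ℓ : ℕ) : ℝ :=
  (((Finset.powersetCard ℓ (Finset.univ : Finset (Fin n))).image fun Y =>
    ∑ Z ∈ (Finset.powersetCard q (Finset.univ : Finset (Fin n))).filter
      (fun Z => Y ⊆ Z), a Z).max).unbotD 0

section

variable {n q : ℕ} {a : Finset (Fin n) → ℝ}

lemma polyMu_nonneg (ha : ∀ Z, 0 ≤ a Z) (ℓ : ℕ) : 0 ≤ polyMu n q a ℓ := by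
  unfold polyMu
  generalize hM : Finset.max (α := ℝ) _ = M
  cases M with
  | bot => exact le_rfl
  | coe b =>
    obtain ⟨Y, -, rfl⟩ := mem_image.1 (mem_of_max hM)
    rw [WithBot.unbotD_coe]
    exact sum_nonneg fun Z _ => ha Z

lemma sum_superset_le_polyMu (Y : Finset (Fin n)) :
    ∑ Z ∈ (powersetCard q univ).filter (fun Z => Y ⊆ Z), a Z ≤ polyMu n q a Y.card := by
  have hY := mem_image_of_mem
    (fun Y => ∑ Z ∈ (powersetCard q (univ : Finset (Fin n))).filter (fun Z => Y ⊆ Z), a Z)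
    (mem_powersetCard.2 ⟨subset_univ Y, rfl⟩)
  obtain ⟨b, hb⟩ := max_of_mem hY
  have hle := le_max_of_eq hY hb
  unfold polyMu
  rwa [hb, WithBot.unbotD_coe]

lemma sum_card_inter_eq_le_choose_mul_polyMu (ha : ∀ Z, 0 ≤ a Z) (W : Finset (Fin n)) (k : ℕ) :
    ∑ Z ∈ (powersetCard q univ).filter (fun Z => (Z ∩ W).card = k), a Z ≤
      (W.card.choose k : ℝ) * polyMu n q a k := by
  have hmaps : ∀ Z ∈ (powersetCard q univ).filter (fun Z => (Z ∩ W).card = k),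
      Z ∩ W ∈ powersetCard k W := fun Z hZ =>
    mem_powersetCard.2 ⟨inter_subset_right, (mem_filter.1 hZ).2⟩
  rw [← sum_fiberwise_of_maps_to hmaps]
  calc _ ≤ ∑ Y ∈ powersetCard k W, polyMu n q a k := by
        refine sum_le_sum fun Y hY => ?_
        rw [← (mem_powersetCard.1 hY).2]
        refine (sum_le_sum_of_subset_of_nonneg ?_ fun Z _ _ => ha Z).trans
          (sum_superset_le_polyMu Y)
        intro Z hZ
        simp only [mem_filter] at hZ ⊢
        exact ⟨hZ.1.1, hZ.2 ▸ inter_subset_left⟩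
    _ = (W.card.choose k : ℝ) * polyMu n q a k := by
        rw [sum_const, card_powersetCard, nsmul_eq_mul]

noncomputable def polyBound (n q : ℕ) (a : Finset (Fin n) → ℝ) (p : ℝ) (N : ℕ) : ℝ :=
  ∑ k ∈ range (q + 1), (N.choose k : ℝ) * polyMu n q a k * p ^ (q - k)

lemma polyBound_nonneg (ha : ∀ Z, 0 ≤ a Z) {p : ℝ} (hp : 0 ≤ p) (N : ℕ) :
    0 ≤ polyBound n q a p N :=
  sum_nonneg fun k _ => by have := polyMu_nonneg (q := q) ha k; positivity

lemma sum_mul_pow_card_sdiff_le_polyBound (ha : ∀ Z, 0 ≤ a Z) {p : ℝ} (hp : 0 ≤ p)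
    {W : Finset (Fin n)} {N : ℕ} (hW : W.card ≤ N) :
    ∑ Z ∈ powersetCard q univ, a Z * p ^ (Z \ W).card ≤ polyBound n q a p N := by
  have hmaps : ∀ Z ∈ powersetCard q univ, (Z ∩ W).card ∈ range (q + 1) := fun Z hZ =>
    mem_range_succ_iff.2 ((mem_powersetCard.1 hZ).2 ▸ card_le_card inter_subset_left)
  rw [← sum_fiberwise_of_maps_to hmaps]
  refine sum_le_sum fun k _ => ?_
  have hsdiff : ∀ Z ∈ (powersetCard q univ).filter (fun Z => (Z ∩ W).card = k),
      (Z \ W).card = q - k := fun Z hZ => by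
    obtain ⟨hZ, hk⟩ := mem_filter.1 hZ
    have := card_inter_add_card_sdiff Z W
    rw [hk, (mem_powersetCard.1 hZ).2] at this
    omega
  have := polyMu_nonneg (q := q) ha k
  calc _ = (∑ Z ∈ (powersetCard q univ).filter (fun Z => (Z ∩ W).card = k), a Z) *
        p ^ (q - k) := by
        rw [sum_mul]
        exact sum_congr rfl fun Z hZ => by rw [hsdiff Z hZ]
    _ ≤ (W.card.choose k : ℝ) * polyMu n q a k * p ^ (q - k) := by
        gcongr
        exact sum_card_inter_eq_le_choose_mul_polyMu ha W k
    _ ≤ (N.choose k : ℝ) * polyMu n q a k * p ^ (q - k) := by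
        gcongr

noncomputable def expandedMoment (q : ℕ) (a : Finset (Fin n) → ℝ) (p : ℝ) :
    ℕ → Finset (Fin n) → ℝ
  | 0, W => p ^ W.card
  | m + 1, W => ∑ Z ∈ powersetCard q univ, a Z * expandedMoment q a p m (W ∪ Z)

lemma expandedMoment_le (ha : ∀ Z, 0 ≤ a Z) {p : ℝ} (hp : 0 ≤ p) {N : ℕ} :
    ∀ (m : ℕ) (W : Finset (Fin n)), W.card + m * q ≤ N →
      expandedMoment q a p m W ≤ p ^ W.card * polyBound n q a p N ^ m
  | 0, W, _ => by simp [expandedMoment]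
  | m + 1, W, hW => by
    have hB := polyBound_nonneg (q := q) ha hp N
    calc expandedMoment q a p (m + 1) W
        ≤ ∑ Z ∈ powersetCard q univ, a Z * (p ^ (W ∪ Z).card * polyBound n q a p N ^ m) := by
          refine sum_le_sum fun Z hZ => mul_le_mul_of_nonneg_left
            (expandedMoment_le ha hp m _ ?_) (ha Z)
          have := card_union_le W Z
          rw [(mem_powersetCard.1 hZ).2] at this
          nlinarith
      _ = (∑ Z ∈ powersetCard q univ, a Z * p ^ (Z \ W).card) *
            (p ^ W.card * polyBound n q a p N ^ m) := by
          rw [sum_mul]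
          refine sum_congr rfl fun Z _ => ?_
          rw [union_comm, ← card_sdiff_add_card, pow_add]
          ring
      _ ≤ polyBound n q a p N * (p ^ W.card * polyBound n q a p N ^ m) := by
          gcongr
          exact sum_mul_pow_card_sdiff_le_polyBound ha hp (by nlinarith)
      _ = p ^ W.card * polyBound n q a p N ^ (m + 1) := by ring

theorem Finset.prod_mul_prod_eq_prod_union_of_isIdempotentElem {ι M : Type*} [CommMonoid M]
    [DecidableEq ι] {f : ι → M} (hf : ∀ i, IsIdempotentElem (f i)) (s t : Finset ι) :
    (∏ i ∈ s, f i) * ∏ i ∈ t, f i = ∏ i ∈ s ∪ t, f i := by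
  rw [← prod_union_inter, ← prod_sdiff (inter_subset_union : s ∩ t ⊆ s ∪ t), mul_assoc,
    ← prod_mul_distrib, prod_congr rfl fun i _ => hf i]

noncomputable def homPoly (q : ℕ) (a : Finset (Fin n) → ℝ) (x : Fin n → ℝ) : ℝ :=
  ∑ Z ∈ powersetCard q univ, a Z * ∏ v ∈ Z, x v

lemma prod_mul_homPoly_pow_succ {x : Fin n → ℝ} (hx : ∀ v, IsIdempotentElem (x v))
    (W : Finset (Fin n)) (m : ℕ) :
    (∏ v ∈ W, x v) * homPoly q a x ^ (m + 1) =
      ∑ Z ∈ powersetCard q univ, a Z * ((∏ v ∈ W ∪ Z, x v) * homPoly q a x ^ m) := by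
  rw [pow_succ', ← mul_assoc, homPoly, mul_sum, sum_mul]
  refine sum_congr rfl fun Z _ => ?_
  rw [← prod_mul_prod_eq_prod_union_of_isIdempotentElem hx]
  ring

lemma abs_prod_mul_homPoly_pow_le {x : Fin n → ℝ} (hx : ∀ v, |x v| ≤ 1)
    (W : Finset (Fin n)) (m : ℕ) :
    |(∏ v ∈ W, x v) * homPoly q a x ^ m| ≤ (∑ Z ∈ powersetCard q univ, |a Z|) ^ m := by
  have hprod : ∀ V : Finset (Fin n), |∏ v ∈ V, x v| ≤ 1 := fun V => by
    rw [abs_prod]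
    exact prod_le_one (fun v _ => abs_nonneg _) fun v _ => hx v
  have hpoly : |homPoly q a x| ≤ ∑ Z ∈ powersetCard q univ, |a Z| :=
    (abs_sum_le_sum_abs _ _).trans <| sum_le_sum fun Z _ => by
      rw [abs_mul]
      exact mul_le_of_le_one_right (abs_nonneg _) (hprod Z)
  rw [abs_mul, abs_pow]
  exact (mul_le_of_le_one_left (by positivity) (hprod W)).trans
    (pow_le_pow_left₀ (abs_nonneg _) hpoly m)

section Probability

variable {Ω : Type*} [MeasurableSpace Ω] {μ : Measure Ω}

lemma ae_eq_zero_or_eq_one_of_map_eq {Y : Ω → ℝ} (hY : AEMeasurable Y μ) {s t : ENNReal}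
    (h : μ.map Y = s • Measure.dirac 1 + t • Measure.dirac 0) :
    ∀ᵐ ω ∂μ, Y ω = 0 ∨ Y ω = 1 := by
  refine ae_of_ae_map (p := fun y => y = 0 ∨ y = 1) hY ?_
  rw [h, ae_add_measure_iff]
  exact ⟨Measure.ae_smul_measure (by simp [ae_dirac_eq]) s,
    Measure.ae_smul_measure (by simp [ae_dirac_eq]) t⟩

lemma integral_eq_of_map_eq_bernoulli {Y : Ω → ℝ} (hY : AEMeasurable Y μ) {p : ℝ} (hp : 0 ≤ p)
    (h : μ.map Y =
      ENNReal.ofReal p • Measure.dirac 1 + ENNReal.ofReal (1 - p) • Measure.dirac 0) :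
    ∫ ω, Y ω ∂μ = p := by
  have hint : ∀ (c : ENNReal) (y : ℝ), c ≠ ⊤ → Integrable id (c • Measure.dirac y) :=
    fun c y hc => (integrable_dirac (by simp)).smul_measure hc
  change ∫ ω, id (Y ω) ∂μ = p
  rw [← integral_map hY aestronglyMeasurable_id, h,
    integral_add_measure (hint _ _ ENNReal.ofReal_ne_top) (hint _ _ ENNReal.ofReal_ne_top),
    integral_smul_measure, integral_smul_measure, integral_dirac, integral_dirac]
  simp [hp]

theorem ProbabilityTheory.iIndepFun.integral_finset_prod {ι : Type*} {X : ι → Ω → ℝ}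
    (hX : iIndepFun X μ) (mX : ∀ i, AEStronglyMeasurable (X i) μ) (W : Finset ι) :
    ∫ ω, ∏ i ∈ W, X i ω ∂μ = ∏ i ∈ W, ∫ ω, X i ω ∂μ := by
  have hW : (fun ω => ∏ i ∈ W, X i ω) = fun ω => ∏ i : W, X i ω :=
    funext fun ω => (prod_coe_sort W _).symm
  rw [hW, ← prod_coe_sort W]
  exact (hX.precomp Subtype.val_injective).integral_fun_prod_eq_prod_integral fun i => mX i

variable {X : Fin n → Ω → ℝ}

lemma integrable_prod_mul_homPoly_pow [IsFiniteMeasure μ] (hX : ∀ v, Measurable (X v))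
    (hX01 : ∀ᵐ ω ∂μ, ∀ v, X v ω = 0 ∨ X v ω = 1) (W : Finset (Fin n)) (m : ℕ) :
    Integrable (fun ω => (∏ v ∈ W, X v ω) * homPoly q a (X · ω) ^ m) μ := by
  refine Integrable.of_bound (by unfold homPoly; fun_prop) _ <| hX01.mono fun ω hω =>
    abs_prod_mul_homPoly_pow_le (fun v => ?_) W m
  rcases hω v with h | h <;> simp [h]

lemma integral_prod_mul_homPoly_pow (hX : ∀ v, Measurable (X v)) (hindep : iIndepFun X μ)
    (hX01 : ∀ᵐ ω ∂μ, ∀ v, X v ω = 0 ∨ X v ω = 1) {p : ℝ} (hEX : ∀ v, ∫ ω, X v ω ∂μ = p)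
    (m : ℕ) (W : Finset (Fin n)) :
    ∫ ω, (∏ v ∈ W, X v ω) * homPoly q a (X · ω) ^ m ∂μ = expandedMoment q a p m W := by
  have := hindep.isProbabilityMeasure
  induction m generalizing W with
  | zero =>
    simp [expandedMoment, hindep.integral_finset_prod fun v => (hX v).aestronglyMeasurable, hEX]
  | succ m ih =>
    calc _ = ∫ ω, ∑ Z ∈ powersetCard q univ,
          a Z * ((∏ v ∈ W ∪ Z, X v ω) * homPoly q a (X · ω) ^ m) ∂μ :=
          integral_congr_ae <| hX01.mono fun ω hω => prod_mul_homPoly_pow_succ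
            (fun v => IsIdempotentElem.iff_eq_zero_or_one.2 (hω v)) W m
      _ = ∑ Z ∈ powersetCard q univ,
          a Z * ∫ ω, (∏ v ∈ W ∪ Z, X v ω) * homPoly q a (X · ω) ^ m ∂μ := by
          rw [integral_finsetSum _ fun Z _ =>
            (integrable_prod_mul_homPoly_pow hX hX01 _ m).const_mul (a Z)]
          exact sum_congr rfl fun Z _ => integral_const_mul _ _
      _ = expandedMoment q a p (m + 1) W := by simp only [ih]; rfl

end Probability

end

theorem stmt1_general {Ω : Type*} [MeasurableSpace Ω] (μ : Measure Ω)
    (n q : ℕ) (a : Finset (Fin n) → ℝ) (ha : ∀ Z, 0 ≤ a Z)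
    (p : ℝ) (hp : p ∈ Set.Icc (0 : ℝ) 1)
    (X : Fin n → Ω → ℝ) (hXmeas : ∀ i, Measurable (X i))
    (hindep : iIndepFun X μ)
    (hdist : ∀ i, Measure.map (X i) μ =
      ENNReal.ofReal p • Measure.dirac (1 : ℝ) +
      ENNReal.ofReal (1 - p) • Measure.dirac (0 : ℝ))
    (w : ℕ) :
    ∫ ω, (∑ Z ∈ Finset.powersetCard q (Finset.univ : Finset (Fin n)),
        a Z * ∏ v ∈ Z, X v ω) ^ w ∂μ ≤
    (∑ k ∈ Finset.range (q + 1),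
      ((w * q).choose k : ℝ) * polyMu n q a k * p ^ (q - k)) ^ w := by
  have hX01 : ∀ᵐ ω ∂μ, ∀ v, X v ω = 0 ∨ X v ω = 1 :=
    ae_all_iff.2 fun v => ae_eq_zero_or_eq_one_of_map_eq (hXmeas v).aemeasurable (hdist v)
  have hEX : ∀ v, ∫ ω, X v ω ∂μ = p := fun v =>
    integral_eq_of_map_eq_bernoulli (hXmeas v).aemeasurable hp.1 (hdist v)
  calc _ = ∫ ω, (∏ v ∈ ∅, X v ω) * homPoly q a (X · ω) ^ w ∂μ := by simp [homPoly]
    _ = expandedMoment q a p w ∅ := integral_prod_mul_homPoly_pow hXmeas hindep hX01 hEX w ∅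
    _ ≤ p ^ (∅ : Finset (Fin n)).card * polyBound n q a p (w * q) ^ w :=
        expandedMoment_le ha hp.1 w ∅ (by simp)
    _ = _ := by rw [card_empty, pow_zero, one_mul]; rfl

/-- Proposition 4.2, part 1 (Fapp-prop2, part 1). -/
theorem stmt1 {Ω : Type*} [MeasurableSpace Ω] (μ : Measure Ω) [IsProbabilityMeasure μ]
    (n q : ℕ) (a : Finset (Fin n) → ℝ) (ha : ∀ Z, 0 ≤ a Z)
    (p : ℝ) (hp : p ∈ Set.Icc (0 : ℝ) 1)
    (X : Fin n → Ω → ℝ) (hXmeas : ∀ i, Measurable (X i))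
    (hindep : iIndepFun X μ)
    (hdist : ∀ i, Measure.map (X i) μ =
      ENNReal.ofReal p • Measure.dirac (1 : ℝ) +
      ENNReal.ofReal (1 - p) • Measure.dirac (0 : ℝ))
    (w : ℕ) :
    ∫ ω, (∑ Z ∈ Finset.powersetCard q (Finset.univ : Finset (Fin n)),
        a Z * ∏ v ∈ Z, X v ω) ^ w ∂μ ≤
    (∑ k ∈ Finset.range (q + 1),
      ((w * q).choose k : ℝ) * polyMu n q a k * p ^ (q - k)) ^ w :=
  stmt1_general μ n q a ha p hp X hXmeas hindep hdist w
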